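/- Let R be a ring and h an entropy function of flows over R satisfying (A0) and (A4*). Then for every flow (M,φ) over R, 𝔔(M,φ) ⊆ P_h(M,φ); that is, every x ∈ M annihilated by a finite product ∏_{j=0}^{k−1}(φ^{n_j} − φ^{m_j}) (with n_j > m_j natural numbers) belongs to the Pinsker radical P_h(M,φ). -/

import Mathlib

open DirectSum

/-- An invariant of algebraic flows over `R`: a function assigning to every left
`R`-module `M` and every `R`-linear endomorphism `φ` of `M` a value in `[0,∞]`. -/
abbrev FlowInvariant (R : Type) [Ring R] : Type 1 :=
  ∀ (M : Type) [AddCommGroup M] [Module R M], (M →ₗ[R] M) → ENNReal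

/-- The direct sum of a family of endomorphisms, acting componentwise on `⨁ j, M j`. -/
noncomputable def dsMap (R : Type) [Ring R] {J : Type} {M : J → Type}
    [∀ j, AddCommGroup (M j)] [∀ j, Module R (M j)]
    (φ : ∀ j, M j →ₗ[R] M j) : (⨁ j, M j) →ₗ[R] ⨁ j, M j :=
  letI := Classical.decEq J
  DirectSum.toModule R J (⨁ j, M j) fun j => (DirectSum.lof R J M j).comp (φ j)

/-- `h` is an entropy function of algebraic flows over `R`: (A1) it vanishes on zero
flows and is invariant under conjugation; (A2) for every `φ`-invariant submodule `N` of
`M`, `h (M,φ)` vanishes iff `h` vanishes on the restriction of `φ` to `N` and on the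
endomorphism induced by `φ` on `M ⧸ N`; (A3) `h` vanishes on a direct sum of flows iff
it vanishes on every summand. -/
def IsFlowEntropyFunction (R : Type) [Ring R] (h : FlowInvariant R) : Prop :=
  (∀ (M : Type) [AddCommGroup M] [Module R M] (φ : M →ₗ[R] M),
      Subsingleton M → h M φ = 0) ∧
  (∀ (M : Type) [AddCommGroup M] [Module R M] (N : Type) [AddCommGroup N] [Module R N]
      (φ : M →ₗ[R] M) (ψ : N →ₗ[R] N) (σ : M ≃ₗ[R] N),
      (∀ x : M, σ (φ x) = ψ (σ x)) → h M φ = h N ψ) ∧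
  (∀ (M : Type) [AddCommGroup M] [Module R M] (φ : M →ₗ[R] M) (N : Submodule R M)
      (hN : ∀ x ∈ N, φ x ∈ N),
      h M φ = 0 ↔
        h ↥N (φ.restrict hN) = 0 ∧
        h (M ⧸ N) (Submodule.mapQ N N φ (fun x hx => hN x hx)) = 0) ∧
  (∀ (J : Type) (M : J → Type) [∀ j, AddCommGroup (M j)] [∀ j, Module R (M j)]
      (φ : ∀ j, M j →ₗ[R] M j),
      h (⨁ j, M j) (dsMap R φ) = 0 ↔ ∀ j, h (M j) (φ j) = 0)

/-- Axiom (A0): `h` vanishes on every zero endomorphism and on every identity. -/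
def FlowA0 (R : Type) [Ring R] (h : FlowInvariant R) : Prop :=
  ∀ (M : Type) [AddCommGroup M] [Module R M],
    h M (0 : M →ₗ[R] M) = 0 ∧ h M (LinearMap.id : M →ₗ[R] M) = 0

/-- Axiom (A4*), the logarithmic law: `h (M, φ^n) = n * h (M, φ)` for every `n ≥ 1`. -/
def FlowA4Star (R : Type) [Ring R] (h : FlowInvariant R) : Prop :=
  ∀ (M : Type) [AddCommGroup M] [Module R M] (φ : M →ₗ[R] M) (n : ℕ), 1 ≤ n →
    h M (φ ^ n) = (n : ENNReal) * h M φ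

/-- The Pinsker radical of a flow `(M, φ)` with respect to `h`: the sum of all
`φ`-invariant submodules on which the restriction of `φ` has zero entropy. -/
def FlowPinsker (R : Type) [Ring R] (h : FlowInvariant R)
    (M : Type) [AddCommGroup M] [Module R M] (φ : M →ₗ[R] M) : Submodule R M :=
  sSup {N : Submodule R M | ∃ hN : ∀ x ∈ N, φ x ∈ N, h ↥N (φ.restrict hN) = 0}



section Aux
variable {R : Type} [Ring R]

lemma pow_semiconj {M M' : Type} [AddCommGroup M] [Module R M] [AddCommGroup M'] [Module R M']
    (f : M →ₗ[R] M') (φ : M →ₗ[R] M) (φ' : M' →ₗ[R] M')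
    (hc : ∀ x, f (φ x) = φ' (f x)) (a : ℕ) (x : M) :
    f ((φ ^ a) x) = (φ' ^ a) (f x) := by
  induction a generalizing x with
  | zero => simp
  | succ a ih =>
    rw [pow_succ', pow_succ', Module.End.mul_apply, Module.End.mul_apply, hc, ih]

lemma listprod_semiconj {M M' : Type} [AddCommGroup M] [Module R M] [AddCommGroup M'] [Module R M']
    (f : M →ₗ[R] M') (φ : M →ₗ[R] M) (φ' : M' →ₗ[R] M')
    (hc : ∀ x, f (φ x) = φ' (f x)) (l : List (ℕ × ℕ)) (x : M) :
    f ((l.map fun p => φ ^ p.1 - φ ^ p.2).prod x)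
      = (l.map fun p => φ' ^ p.1 - φ' ^ p.2).prod (f x) := by
  induction l generalizing x with
  | nil => simp
  | cons p t ih =>
    simp only [List.map_cons, List.prod_cons, Module.End.mul_apply]
    rw [LinearMap.sub_apply, LinearMap.sub_apply, map_sub,
      pow_semiconj f φ φ' hc, pow_semiconj f φ φ' hc, ih]

end Aux

section Entropy
variable {R : Type} [Ring R] {h : FlowInvariant R}

lemma single_zero (H : IsFlowEntropyFunction R h) (H0 : FlowA0 R h) (H4 : FlowA4Star R h)
    (M : Type) [AddCommGroup M] [Module R M] (φ : M →ₗ[R] M) {n m : ℕ} (hmn : m < n)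
    (heq : φ ^ n = φ ^ m) : h M φ = 0 := by
  obtain ⟨HA1s, HA1c, HA2, HA3⟩ := H
  have hzero : ∀ (N' : Type) (inst1 : AddCommGroup N'), ∀ (inst2 : Module R N') (ψ : N' →ₗ[R] N')
      (a : ℕ), 1 ≤ a → h N' (ψ ^ a) = 0 → h N' ψ = 0 := by
    intro N' _ _ ψ a ha h0
    rw [H4 N' ψ a ha] at h0
    rcases mul_eq_zero.mp h0 with h1 | h1
    · exact absurd (Nat.cast_eq_zero.mp h1) (by omega)
    · exact h1
  rcases Nat.eq_zero_or_pos m with rfl | hm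
  · rw [pow_zero] at heq
    refine hzero M _ _ φ n (by omega) ?_
    rw [heq, Module.End.one_eq_id]
    exact (H0 M).2
  · set N := LinearMap.range (φ ^ m) with hNdef
    have hcomm : Commute φ (φ ^ m) := (Commute.pow_self φ m).symm
    have hN : ∀ x ∈ N, φ x ∈ N := by
      rintro x ⟨y, rfl⟩
      exact ⟨φ y, (LinearMap.congr_fun hcomm.symm y)⟩
    refine (HA2 M φ N hN).mpr ⟨?_, ?_⟩
    · set ψ := φ.restrict hN with hψ
      have hψpow : ψ ^ (n - m) = 1 := by
        ext z
        rw [hψ, Module.End.pow_restrict, LinearMap.restrict_coe_apply, Module.End.one_apply]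
        obtain ⟨y, hy⟩ := z.2
        rw [← hy, ← Module.End.mul_apply, ← pow_add, Nat.sub_add_cancel (le_of_lt hmn), heq]
      refine hzero ↥N _ _ ψ (n - m) (by omega) ?_
      rw [hψpow, Module.End.one_eq_id]
      exact (H0 ↥N).2
    · set φbar := Submodule.mapQ N N φ (fun x hx => hN x hx) with hφbar
      have hpow : φbar ^ m = 0 := by
        rw [hφbar, ← Submodule.mapQ_pow]
        apply Submodule.linearMap_qext
        ext x
        simp only [LinearMap.comp_apply, Submodule.mkQ_apply, Submodule.mapQ_apply,
          LinearMap.zero_apply, Submodule.Quotient.mk_eq_zero]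
        exact ⟨x, rfl⟩
      refine hzero (M ⧸ N) _ _ φbar m hm ?_
      rw [hpow]
      exact (H0 (M ⧸ N)).1

lemma prod_zero (H : IsFlowEntropyFunction R h) (H0 : FlowA0 R h) (H4 : FlowA4Star R h) :
    ∀ (l : List (ℕ × ℕ)), (∀ p ∈ l, p.2 < p.1) →
    ∀ (M : Type) [AddCommGroup M] [Module R M] (φ : M →ₗ[R] M),
    (l.map fun p => φ ^ p.1 - φ ^ p.2).prod = 0 → h M φ = 0 := by
  intro l
  induction l with
  | nil =>
    intro _ M _ _ φ hprod
    simp only [List.map_nil, List.prod_nil] at hprod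
    have : Subsingleton M := by
      constructor
      intro a b
      have ha := LinearMap.congr_fun hprod a
      have hb := LinearMap.congr_fun hprod b
      simp only [Module.End.one_apply, LinearMap.zero_apply] at ha hb
      rw [ha, hb]
    exact H.1 M φ this
  | cons p t ih =>
    intro hk M _ _ φ hprod
    simp only [List.map_cons, List.prod_cons] at hprod
    set Q := (t.map fun p => φ ^ p.1 - φ ^ p.2).prod with hQ
    have hcomm : Commute φ Q := by
      apply Commute.list_prod_right
      intro y hy
      obtain ⟨q, hq, rfl⟩ := List.mem_map.mp hy
      exact ((Commute.refl φ).pow_right q.1).sub_right ((Commute.refl φ).pow_right q.2)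
    set N := LinearMap.range Q with hN'
    have hN : ∀ x ∈ N, φ x ∈ N := by
      rintro x ⟨y, rfl⟩
      exact ⟨φ y, (LinearMap.congr_fun hcomm.symm y)⟩
    refine ((H.2.2.1) M φ N hN).mpr ⟨?_, ?_⟩
    · set ψ := φ.restrict hN with hψ
      refine single_zero H H0 H4 ↥N ψ (hk p List.mem_cons_self) ?_
      ext z
      rw [hψ, Module.End.pow_restrict, Module.End.pow_restrict,
        LinearMap.restrict_coe_apply, LinearMap.restrict_coe_apply]
      obtain ⟨y, hy⟩ := z.2
      rw [← hy]
      have := LinearMap.congr_fun hprod y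
      simp only [Module.End.mul_apply, LinearMap.zero_apply, LinearMap.sub_apply] at this
      exact sub_eq_zero.mp this
    · set φbar := Submodule.mapQ N N φ (fun x hx => hN x hx) with hφbar
      refine ih (fun q hq => hk q (List.mem_cons_of_mem p hq)) (M ⧸ N) φbar ?_
      apply Submodule.linearMap_qext
      ext x
      simp only [LinearMap.comp_apply, Submodule.mkQ_apply, LinearMap.zero_apply]
      have hc : ∀ y : M, N.mkQ (φ y) = φbar (N.mkQ y) := by
        intro y
        rw [hφbar, Submodule.mkQ_apply, Submodule.mkQ_apply, Submodule.mapQ_apply]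
      have hsc := (listprod_semiconj N.mkQ φ φbar hc t x).symm
      rw [Submodule.mkQ_apply, Submodule.mkQ_apply] at hsc
      rw [hsc, ← hQ, Submodule.Quotient.mk_eq_zero]
      exact ⟨x, rfl⟩

end Entropy

/-- If `h` is an entropy function of flows over `R` satisfying (A0) and (A4*), then
`𝔔(M,φ) ⊆ P_h(M,φ)`: every `x ∈ M` annihilated by a finite product
`∏_j (φ^{n_j} - φ^{m_j})` with `n_j > m_j` belongs to the Pinsker radical. -/
theorem quasiPeriodic_radical_le_pinsker (R : Type) [Ring R] (h : FlowInvariant R)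
    (H : IsFlowEntropyFunction R h) (H0 : FlowA0 R h) (H4 : FlowA4Star R h)
    (M : Type) [AddCommGroup M] [Module R M] (φ : M →ₗ[R] M)
    (x : M) (k : ℕ) (n m : Fin k → ℕ) (hlt : ∀ j, m j < n j)
    (hx : (List.ofFn fun j => φ ^ (n j) - φ ^ (m j)).prod x = 0) :
    x ∈ FlowPinsker R h M φ := by
  classical
  set l : List (ℕ × ℕ) := List.ofFn fun j => (n j, m j) with hl
  have hmapl : (l.map fun p => φ ^ p.1 - φ ^ p.2) = List.ofFn fun j => φ ^ (n j) - φ ^ (m j) := by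
    rw [hl, List.map_ofFn]
    rfl
  set Q := (l.map fun p => φ ^ p.1 - φ ^ p.2).prod with hQ
  have hQx : Q x = 0 := by rw [hQ, hmapl]; exact hx
  have hcomm : Commute φ Q := by
    apply Commute.list_prod_right
    intro y hy
    obtain ⟨q, hq, rfl⟩ := List.mem_map.mp hy
    exact ((Commute.refl φ).pow_right q.1).sub_right ((Commute.refl φ).pow_right q.2)
  set N := Submodule.span R (Set.range fun i : ℕ => (φ ^ i) x) with hNdef
  have hN : ∀ y ∈ N, φ y ∈ N := by
    intro y hy
    refine Submodule.span_induction (p := fun y _ => φ y ∈ N) ?_ ?_ ?_ ?_ hy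
    · rintro _ ⟨i, rfl⟩
      apply Submodule.subset_span
      refine ⟨i + 1, ?_⟩
      show (φ ^ (i + 1)) x = φ ((φ ^ i) x)
      rw [pow_succ', Module.End.mul_apply]
    · simp
    · intro a b _ _ ha hb; rw [map_add]; exact N.add_mem ha hb
    · intro r a _ ha; rw [map_smul]; exact N.smul_mem r ha
  have hker : N ≤ LinearMap.ker Q := by
    rw [hNdef, Submodule.span_le]
    rintro _ ⟨i, rfl⟩
    simp only [SetLike.mem_coe, LinearMap.mem_ker]
    show Q ((φ ^ i) x) = 0
    rw [← Module.End.mul_apply, ← (hcomm.pow_left i).eq, Module.End.mul_apply, hQx, map_zero]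
  have hzero : h ↥N (φ.restrict hN) = 0 := by
    refine prod_zero H H0 H4 l ?_ ↥N (φ.restrict hN) ?_
    · intro p hp
      rw [hl] at hp
      obtain ⟨j, hj⟩ := List.mem_ofFn.mp hp
      rw [← hj]
      exact hlt j
    · ext z
      have hc : ∀ y : ↥N, N.subtype ((φ.restrict hN) y) = φ (N.subtype y) := fun y =>
        LinearMap.restrict_coe_apply φ hN y
      have hsc := listprod_semiconj N.subtype (φ.restrict hN) φ hc l z
      simp only [Submodule.coe_subtype] at hsc
      rw [hsc, ← hQ]
      have h0 : Q (z : M) = 0 := hker z.2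
      rw [h0]
      rfl
  have hxN : x ∈ N := by
    apply Submodule.subset_span
    show x ∈ Set.range fun i : ℕ => (φ ^ i) x
    exact ⟨0, by simp⟩
  have hmem : N ∈ {P : Submodule R M | ∃ hP : ∀ x ∈ P, φ x ∈ P, h ↥P (φ.restrict hP) = 0} :=
    ⟨hN, hzero⟩
  unfold FlowPinsker
  exact Submodule.mem_sSup_of_mem hmem hxN
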